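/- Let g = p_n^A(a_1|…|a_m \ b_1|…|b_t) be a type-A seaweed whose meander M(g) consists of exactly two connected components P_1 and P_2, both of which are paths, with vertex index sets V_1 and V_2 respectively. Let H be the diagonal matrix H = |V_2| Σ_{i∈V_1} e_{i,i} − |V_1| Σ_{j∈V_2} e_{j,j}, where e_{i,j} denotes the matrix unit with 1 in entry (i,j) and zeros elsewhere. Then H ∈ g and F̄([H, x]) = 0 for every x ∈ g; that is, H lies in the kernel of the bilinear form B_F̄(x,y) = F̄([x,y]). -/

import Mathlib

open scoped TensorProduct

noncomputable section

namespace ContactSeaweeds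

attribute [local instance 100] LieRing.ofAssociativeRing

/-! ### Index of a Lie algebra -/

/-- The kernel of the Kirillov form `B_φ(x, y) = φ ⁅x, y⁆` associated to a one-form `φ`. -/
def kirillovKernel {L : Type*} [LieRing L] [LieAlgebra ℂ L] (φ : Module.Dual ℂ L) :
    Submodule ℂ L where
  carrier := {x | ∀ y, φ ⁅x, y⁆ = 0}
  add_mem' := by
    intro x y hx hy z
    simp [add_lie, hx z, hy z]
  zero_mem' := by intro y; simp
  smul_mem' := by
    intro c x hx y
    simp [smul_lie, hx y]

/-- The index of a complex Lie algebra: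
`ind L = min_{φ ∈ L*} dim {x ∈ L | φ ⁅x, y⁆ = 0 for all y ∈ L}`. -/
def lieIndex (L : Type*) [LieRing L] [LieAlgebra ℂ L] : ℕ :=
  sInf {d : ℕ | ∃ φ : Module.Dual ℂ L, d = Module.finrank ℂ (kirillovKernel φ)}

/-! ### Contact structures -/

/-- Wedge product of complex-valued alternating forms. -/
def wedge {L : Type*} [AddCommGroup L] [Module ℂ L] {p q : ℕ}
    (α : L [⋀^Fin p]→ₗ[ℂ] ℂ) (β : L [⋀^Fin q]→ₗ[ℂ] ℂ) : L [⋀^Fin (p + q)]→ₗ[ℂ] ℂ :=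
  ((TensorProduct.lid ℂ ℂ).toLinearMap.compAlternatingMap (α.domCoprod β)).domDomCongr
    finSumFinEquiv

/-- `k`-th wedge power of a two-form. -/
def wedgePow {L : Type*} [AddCommGroup L] [Module ℂ L] (β : L [⋀^Fin 2]→ₗ[ℂ] ℂ) :
    (k : ℕ) → L [⋀^Fin (2 * k)]→ₗ[ℂ] ℂ
  | 0 => (AlternatingMap.constOfIsEmpty ℂ L (Fin 0) 1).domDomCongr (finCongr (by ring))
  | k + 1 => (wedge β (wedgePow β k)).domDomCongr (finCongr (by ring))

/-- The alternating two-form `dφ (x, y) = -φ ⁅x, y⁆`. -/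
def dForm {L : Type*} [LieRing L] [LieAlgebra ℂ L] (φ : Module.Dual ℂ L) :
    L [⋀^Fin 2]→ₗ[ℂ] ℂ where
  toFun v := -φ ⁅v 0, v 1⁆
  map_update_add' := by
    intro _ v i x y
    fin_cases i <;>
      simp [Function.update_apply, Fin.ext_iff, add_lie, lie_add] <;> ring
  map_update_smul' := by
    intro _ v i c x
    fin_cases i <;>
      simp [Function.update_apply, Fin.ext_iff, smul_lie, lie_smul]
  map_eq_zero_of_eq' := by
    intro v i j hv hij
    have : i = 0 ∧ j = 1 ∨ i = 1 ∧ j = 0 := by omega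
    rcases this with ⟨hi, hj⟩ | ⟨hi, hj⟩ <;> subst hi <;> subst hj <;>
      · show -φ ⁅v 0, v 1⁆ = 0
        rw [hv]
        simp

/-- The `(1 + 2n)`-form `φ ∧ (dφ)^n`. -/
def contactCandidate {L : Type*} [LieRing L] [LieAlgebra ℂ L] (n : ℕ)
    (φ : Module.Dual ℂ L) : L [⋀^Fin (1 + 2 * n)]→ₗ[ℂ] ℂ :=
  wedge (AlternatingMap.ofSubsingleton ℂ L ℂ (0 : Fin 1) φ) (wedgePow (dForm φ) n)

/-- `φ` is a contact form: `φ ∧ (dφ)^n ≠ 0` (for a Lie algebra of dimension `2n + 1`). -/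
def IsContactForm {L : Type*} [LieRing L] [LieAlgebra ℂ L] (n : ℕ)
    (φ : Module.Dual ℂ L) : Prop :=
  contactCandidate n φ ≠ 0

/-- A complex Lie algebra is contact if it has (odd) dimension `2n + 1` and admits a one-form
`φ` with `φ ∧ (dφ)^n ≠ 0`. -/
def IsContact (L : Type*) [LieRing L] [LieAlgebra ℂ L] : Prop :=
  ∃ n : ℕ, Module.finrank ℂ L = 2 * n + 1 ∧ ∃ φ : Module.Dual ℂ L, IsContactForm n φ

/-! ### Seaweed algebras -/

/-- `c` is a composition of `n`: a list of positive integers summing to `n`. -/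
def IsComposition (n : ℕ) (c : List ℕ) : Prop :=
  (∀ x ∈ c, 0 < x) ∧ c.sum = n

/-- `i` and `j` (0-based) lie in the same block of the composition `c`. -/
def SameBlock (c : List ℕ) (i j : ℕ) : Prop :=
  ∃ k : ℕ, (c.take k).sum ≤ i ∧ i < (c.take (k + 1)).sum ∧
    (c.take k).sum ≤ j ∧ j < (c.take (k + 1)).sum

/-- The `(i, j)` location (0-based) is admissible for the seaweed determined by the
compositions `a` (lower-triangular blocks) and `b` (upper-triangular blocks). -/
def Admissible (a b : List ℕ) (i j : ℕ) : Prop :=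
  (j ≤ i ∧ SameBlock a i j) ∨ (i ≤ j ∧ SameBlock b i j)

lemma take_sum_mono (c : List ℕ) {m m' : ℕ} (h : m ≤ m') :
    (c.take m).sum ≤ (c.take m').sum := by
  obtain ⟨d, rfl⟩ := Nat.exists_eq_add_of_le h
  rw [List.take_add, List.sum_append]
  omega

lemma sameBlock_symm {c : List ℕ} {i j : ℕ} (h : SameBlock c i j) : SameBlock c j i := by
  obtain ⟨k, h1, h2, h3, h4⟩ := h
  exact ⟨k, h3, h4, h1, h2⟩

lemma sameBlock_trans {c : List ℕ} {i j k : ℕ} (h1 : SameBlock c i k) (h2 : SameBlock c k j) :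
    SameBlock c i j := by
  obtain ⟨k1, a1, a2, a3, a4⟩ := h1
  obtain ⟨k2, b1, b2, b3, b4⟩ := h2
  have hk : k1 = k2 := by
    rcases Nat.lt_trichotomy k1 k2 with h | h | h
    · have := take_sum_mono c (show k1 + 1 ≤ k2 from h)
      omega
    · exact h
    · have := take_sum_mono c (show k2 + 1 ≤ k1 from h)
      omega
  subst hk
  exact ⟨k1, a1, a2, b3, b4⟩

lemma sameBlock_between {c : List ℕ} {i j z : ℕ} (h : SameBlock c i j)
    (h1 : i ≤ z ∨ j ≤ z) (h2 : z ≤ i ∨ z ≤ j) : SameBlock c i z := by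
  obtain ⟨k, a1, a2, a3, a4⟩ := h
  exact ⟨k, a1, a2, by omega, by omega⟩

lemma admissible_trans {a b : List ℕ} {i j k : ℕ} (h1 : Admissible a b i k)
    (h2 : Admissible a b k j) : Admissible a b i j := by
  rcases h1 with ⟨hik, hsb1⟩ | ⟨hik, hsb1⟩ <;> rcases h2 with ⟨hkj, hsb2⟩ | ⟨hkj, hsb2⟩
  · exact Or.inl ⟨le_trans hkj hik, sameBlock_trans hsb1 hsb2⟩
  · rcases le_or_gt j i with hji | hij
    · exact Or.inl ⟨hji, sameBlock_between hsb1 (by omega) (by omega)⟩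
    · exact Or.inr ⟨le_of_lt hij, sameBlock_trans
        (sameBlock_symm (sameBlock_between hsb2 (by omega) (by omega))) hsb2⟩
  · rcases le_or_gt j i with hji | hij
    · exact Or.inl ⟨hji, sameBlock_trans
        (sameBlock_symm (sameBlock_between hsb2 (by omega) (by omega))) hsb2⟩
    · exact Or.inr ⟨le_of_lt hij, sameBlock_between hsb1 (by omega) (by omega)⟩
  · exact Or.inr ⟨le_trans hik hkj, sameBlock_trans hsb1 hsb2⟩

/-- The type-A seaweed `pₙᴬ(a₁|⋯|aₘ \ b₁|⋯|b_t)`: the Lie algebra of traceless `n × n`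
complex matrices supported on admissible locations. -/
def seaweed (n : ℕ) (a b : List ℕ) : LieSubalgebra ℂ (Matrix (Fin n) (Fin n) ℂ) where
  carrier := {M | Matrix.trace M = 0 ∧
    ∀ i j : Fin n, ¬ Admissible a b i.val j.val → M i j = 0}
  add_mem' := by
    rintro M N ⟨hM1, hM2⟩ ⟨hN1, hN2⟩
    refine ⟨by simp [Matrix.trace_add, hM1, hN1], fun i j h => ?_⟩
    simp [Matrix.add_apply, hM2 i j h, hN2 i j h]
  zero_mem' := by simp
  smul_mem' := by
    rintro c M ⟨hM1, hM2⟩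
    refine ⟨by simp [Matrix.trace_smul, hM1], fun i j h => ?_⟩
    simp [Matrix.smul_apply, hM2 i j h]
  lie_mem' := by
    rintro M N ⟨hM1, hM2⟩ ⟨hN1, hN2⟩
    rw [Ring.lie_def]
    constructor
    · rw [Matrix.trace_sub, Matrix.trace_mul_comm, sub_self]
    · intro i j h
      rw [Matrix.sub_apply, Matrix.mul_apply, Matrix.mul_apply]
      have hz : ∀ k : Fin n, M i k * N k j = 0 ∧ N i k * M k j = 0 := by
        intro k
        constructor
        · by_cases hik : Admissible a b i.val k.val
          · rw [hN2 k j (fun hkj => h (admissible_trans hik hkj)), mul_zero]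
          · rw [hM2 i k hik, zero_mul]
        · by_cases hik : Admissible a b i.val k.val
          · rw [hM2 k j (fun hkj => h (admissible_trans hik hkj)), mul_zero]
          · rw [hN2 i k hik, zero_mul]
      rw [Finset.sum_congr rfl (fun k _ => (hz k).1), Finset.sum_congr rfl (fun k _ => (hz k).2)]
      simp

/-! ### Meanders -/

/-- `{i, j}` (0-based, with `i < j`) is a top edge of the meander of the composition `a`. -/
def TopEdge (a : List ℕ) (i j : ℕ) : Prop :=
  ∃ k r : ℕ, 2 * r + 1 < a.getD k 0 ∧
    i = (a.take k).sum + r ∧ j = (a.take k).sum + (a.getD k 0 - 1 - r)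

/-- `{i, j}` (0-based, with `i < j`) is a bottom edge of the meander of the composition `b`. -/
def BottomEdge (b : List ℕ) (i j : ℕ) : Prop :=
  ∃ k r : ℕ, 2 * r + 1 < b.getD k 0 ∧
    i = (b.take k).sum + r ∧ j = (b.take k).sum + (b.getD k 0 - 1 - r)

/-- The meander of the seaweed with compositions `a` and `b`, as a graph on the `n` vertices:
two vertices are adjacent when they are joined by a top edge or a bottom edge. -/
def meander (n : ℕ) (a b : List ℕ) : SimpleGraph (Fin n) where
  Adj i j := i ≠ j ∧ (TopEdge a i.val j.val ∨ TopEdge a j.val i.val ∨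
    BottomEdge b i.val j.val ∨ BottomEdge b j.val i.val)
  symm := by
    refine ⟨?_⟩
    rintro i j ⟨h1, h2⟩
    exact ⟨h1.symm, by tauto⟩
  loopless := ⟨fun i h => h.1 rfl⟩

/-- The vertex `v` (0-based) lies on exactly one top edge of the meander. -/
def OneTop (a : List ℕ) (v : ℕ) : Prop :=
  ∃! w : ℕ, TopEdge a v w ∨ TopEdge a w v

/-- The vertex `v` (0-based) lies on exactly one bottom edge of the meander. -/
def OneBottom (b : List ℕ) (v : ℕ) : Prop :=
  ∃! w : ℕ, BottomEdge b v w ∨ BottomEdge b w v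

/-- A connected component of the meander is a cycle: each of its vertices lies on exactly one
top edge and exactly one bottom edge. -/
def IsCycleComp {n : ℕ} {a b : List ℕ} (c : (meander n a b).ConnectedComponent) : Prop :=
  ∀ v : Fin n, (meander n a b).connectedComponentMk v = c → OneTop a v.val ∧ OneBottom b v.val

/-- A connected component of the meander is a path (possibly a single vertex): it has a vertex
missing a top edge or a bottom edge. -/
def IsPathComp {n : ℕ} {a b : List ℕ} (c : (meander n a b).ConnectedComponent) : Prop :=
  ∃ v : Fin n, (meander n a b).connectedComponentMk v = c ∧
    ¬ (OneTop a v.val ∧ OneBottom b v.val)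

/-! ### Distinguished linear functionals on matrices -/

/-- The linear functional `M ↦ M i j` on matrices. -/
def entryForm {n : ℕ} (i j : Fin n) : Matrix (Fin n) (Fin n) ℂ →ₗ[ℂ] ℂ :=
  (Matrix.traceLinearMap (Fin n) ℂ ℂ).comp (LinearMap.mulLeft ℂ (Matrix.single j i 1))

open scoped Classical in
/-- The one-form `F̄` read off the meander: the sum, over top edges `{v_i, v_j}` with `i < j`,
of `M ↦ M j i`, plus the sum, over bottom edges `{v_i, v_j}` with `i < j`, of `M ↦ M i j`. -/
def meanderForm (n : ℕ) (a b : List ℕ) : Matrix (Fin n) (Fin n) ℂ →ₗ[ℂ] ℂ :=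
  ∑ i : Fin n, ∑ j : Fin n,
    ((if TopEdge a i.val j.val then entryForm j i else 0) +
      (if BottomEdge b i.val j.val then entryForm i j else 0))

open scoped Classical in
/-- The linear functional `M ↦ M₁₁ + ⋯ + M_{i,i}` (1-based indexing), i.e. the sum of the
first `i` diagonal entries. -/
def partialTraceForm (n i : ℕ) : Matrix (Fin n) (Fin n) ℂ →ₗ[ℂ] ℂ :=
  (Matrix.traceLinearMap (Fin n) ℂ ℂ).comp
    (LinearMap.mulLeft ℂ (Matrix.diagonal fun l : Fin n => if l.val < i then (1 : ℂ) else 0))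

/-- The generating set `{e_{i,1} : 2 ≤ i ≤ a} ∪ {e_{a,j} : 2 ≤ j ≤ a-1}` (1-based indexing) of
a Heisenberg subalgebra of `n × n` matrices. -/
def heisSet (n a : ℕ) : Set (Matrix (Fin n) (Fin n) ℂ) :=
  {M | ∃ i j : Fin n, M = Matrix.single i j 1 ∧
    ((j.val = 0 ∧ 1 ≤ i.val ∧ i.val ≤ a - 1) ∨
      (i.val = a - 1 ∧ 1 ≤ j.val ∧ j.val ≤ a - 2))}

/-!
The diagonal of `H` is constant on each component of the meander and has trace
`|V₂||V₁| - |V₁||V₂| = 0`; diagonal positions are always admissible, so `H ∈ g`. The `(i, j)`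
entry of `⁅H, x⁆` is `(H_{ii} - H_{jj}) x_{ij}`, which vanishes whenever `v_i` and `v_j` are joined
by an edge, and `F̄` only reads entries at edges of the meander.
-/

lemma sum_connectedComponentMk {V M : Type*} [Fintype V] [AddCommMonoid M] {G : SimpleGraph V}
    [Fintype G.ConnectedComponent] (f : G.ConnectedComponent → M) :
    ∑ v, f (G.connectedComponentMk v) = ∑ c, Nat.card c.supp • f c := by
  classical
  rw [← Fintype.sum_fiberwise' G.connectedComponentMk f]
  refine Fintype.sum_congr _ _ fun c => ?_
  rw [Finset.sum_const, Finset.card_univ, ← Nat.card_eq_fintype_card]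
  rfl

lemma exists_take_sum_le_lt_take_succ_sum (c : List ℕ) {i : ℕ} (hi : i < c.sum) :
    ∃ k, (c.take k).sum ≤ i ∧ i < (c.take (k + 1)).sum := by
  induction c generalizing i with
  | nil => simp at hi
  | cons x t ih =>
    by_cases hix : i < x
    · exact ⟨0, by simp, by simpa using hix⟩
    · obtain ⟨k, h1, h2⟩ := ih (i := i - x) (by simp at hi; omega)
      exact ⟨k + 1, by simp; omega, by simp; omega⟩

lemma admissible_self {n : ℕ} {a : List ℕ} (b : List ℕ) (ha : IsComposition n a) {i : ℕ}
    (hi : i < n) : Admissible a b i i := by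
  obtain ⟨k, h1, h2⟩ := exists_take_sum_le_lt_take_succ_sum a (ha.2 ▸ hi)
  exact Or.inl ⟨le_rfl, k, h1, h2, h1, h2⟩

lemma diagonal_mem_seaweed {n : ℕ} {a : List ℕ} (b : List ℕ) (ha : IsComposition n a)
    {d : Fin n → ℂ} (hd : ∑ i, d i = 0) : Matrix.diagonal d ∈ seaweed n a b := by
  refine ⟨by rwa [Matrix.trace_diagonal], fun i j hij => Matrix.diagonal_apply_ne d ?_⟩
  rintro rfl
  exact hij (admissible_self b ha i.isLt)

lemma meander_adj_of_topEdge {n : ℕ} {a : List ℕ} (b : List ℕ) {i j : Fin n}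
    (h : TopEdge a i j) : (meander n a b).Adj i j := by
  obtain ⟨k, r, hr, hi, hj⟩ := h
  exact ⟨Fin.ne_of_val_ne (by omega), Or.inl ⟨k, r, hr, hi, hj⟩⟩

lemma meander_adj_of_bottomEdge {n : ℕ} (a : List ℕ) {b : List ℕ} {i j : Fin n}
    (h : BottomEdge b i j) : (meander n a b).Adj i j := by
  obtain ⟨k, r, hr, hi, hj⟩ := h
  exact ⟨Fin.ne_of_val_ne (by omega), Or.inr (Or.inr (Or.inl ⟨k, r, hr, hi, hj⟩))⟩

lemma entryForm_apply {n : ℕ} (i j : Fin n) (M : Matrix (Fin n) (Fin n) ℂ) :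
    entryForm i j M = M i j := by
  simp [entryForm, Matrix.trace, Matrix.mul_apply, Matrix.single, ite_and]

open scoped Classical in
lemma meanderForm_eq_zero {n : ℕ} {a b : List ℕ} {M : Matrix (Fin n) (Fin n) ℂ}
    (hM : ∀ i j, (meander n a b).Adj i j → M i j = 0) : meanderForm n a b M = 0 := by
  simp only [meanderForm, LinearMap.sum_apply, LinearMap.add_apply]
  refine Finset.sum_eq_zero fun i _ => Finset.sum_eq_zero fun j _ => ?_
  have htop : (if TopEdge a i j then entryForm j i else 0) M = 0 := by
    split_ifs with h
    · rw [entryForm_apply, hM j i (meander_adj_of_topEdge b h).symm]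
    · rfl
  have hbottom : (if BottomEdge b i j then entryForm i j else 0) M = 0 := by
    split_ifs with h
    · rw [entryForm_apply, hM i j (meander_adj_of_bottomEdge a h)]
    · rfl
  rw [htop, hbottom, add_zero]

lemma lie_diagonal_apply {n : ℕ} (d : Fin n → ℂ) (x : Matrix (Fin n) (Fin n) ℂ) (i j : Fin n) :
    ⁅Matrix.diagonal d, x⁆ i j = (d i - d j) * x i j := by
  rw [Ring.lie_def, Matrix.sub_apply, Matrix.diagonal_mul, Matrix.mul_diagonal]
  ring

lemma meanderForm_lie_diagonal_comp_connectedComponentMk {n : ℕ} (a b : List ℕ)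
    (f : (meander n a b).ConnectedComponent → ℂ) (x : Matrix (Fin n) (Fin n) ℂ) :
    meanderForm n a b ⁅Matrix.diagonal (f ∘ (meander n a b).connectedComponentMk), x⁆ = 0 :=
  meanderForm_eq_zero fun i j hij => by
    rw [lie_diagonal_apply, Function.comp_apply, Function.comp_apply,
      SimpleGraph.ConnectedComponent.sound hij.reachable, sub_self, zero_mul]

open scoped Classical in
theorem diagonal_kernel_element_of_two_paths_general (n : ℕ) (a b : List ℕ) (ha : IsComposition n a)
    (c1 c2 : (meander n a b).ConnectedComponent) (hne : c1 ≠ c2)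
    (hall : ∀ c : (meander n a b).ConnectedComponent, c = c1 ∨ c = c2) :
    Matrix.diagonal (fun i : Fin n =>
        if (meander n a b).connectedComponentMk i = c1 then (Nat.card c2.supp : ℂ)
        else -(Nat.card c1.supp : ℂ)) ∈ seaweed n a b ∧
      ∀ x ∈ seaweed n a b,
        meanderForm n a b
          ⁅Matrix.diagonal (fun i : Fin n =>
              if (meander n a b).connectedComponentMk i = c1 then (Nat.card c2.supp : ℂ)
              else -(Nat.card c1.supp : ℂ)), x⁆ = 0 := by
  set h : (meander n a b).ConnectedComponent → ℂ :=
    fun c => if c = c1 then (Nat.card c2.supp : ℂ) else -(Nat.card c1.supp : ℂ)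
  have htrace : ∑ i, h ((meander n a b).connectedComponentMk i) = 0 := by
    rw [sum_connectedComponentMk, Fintype.sum_eq_add c1 c2 hne
      fun c hc => ((hall c).elim hc.1 hc.2).elim]
    simp only [h, if_pos rfl, if_neg hne.symm, nsmul_eq_mul]
    ring
  exact ⟨diagonal_mem_seaweed b ha htrace,
    fun x _ => meanderForm_lie_diagonal_comp_connectedComponentMk a b h x⟩

open scoped Classical in
/-- For a seaweed whose meander consists of exactly two paths `P₁`, `P₂`,
the diagonal matrix `H = |V₂| ∑_{i ∈ V₁} e_{i,i} - |V₁| ∑_{j ∈ V₂} e_{j,j}` belongs to the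
seaweed and lies in the kernel of the bilinear form `B_F̄(x, y) = F̄ ⁅x, y⁆`. -/
theorem diagonal_kernel_element_of_two_paths (n : ℕ) (hn : 0 < n) (a b : List ℕ)
    (ha : IsComposition n a) (hb : IsComposition n b)
    (c1 c2 : (meander n a b).ConnectedComponent) (hne : c1 ≠ c2)
    (hp1 : IsPathComp c1) (hp2 : IsPathComp c2)
    (hall : ∀ c : (meander n a b).ConnectedComponent, c = c1 ∨ c = c2) :
    Matrix.diagonal (fun i : Fin n =>
        if (meander n a b).connectedComponentMk i = c1 then (Nat.card c2.supp : ℂ)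
        else -(Nat.card c1.supp : ℂ)) ∈ seaweed n a b ∧
      ∀ x ∈ seaweed n a b,
        meanderForm n a b
          ⁅Matrix.diagonal (fun i : Fin n =>
              if (meander n a b).connectedComponentMk i = c1 then (Nat.card c2.supp : ℂ)
              else -(Nat.card c1.supp : ℂ)), x⁆ = 0 :=
  diagonal_kernel_element_of_two_paths_general n a b ha c1 c2 hne hall

end ContactSeaweeds
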